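/- A connected Hausdorff topological n-manifold that supports a minimal flow is metrizable. Equivalently, a non-metrizable connected Hausdorff manifold never supports a minimal flow: if φ : ℝ × M → M is a flow on a connected Hausdorff manifold M such that every orbit is dense, then M is metrizable. -/

import Mathlib

open Topology Metric

/-- A topological `n`-manifold: every point has an open neighbourhood homeomorphic
to `ℝⁿ`. No metrizability or second countability is assumed. -/
def IsManifoldOfDim (n : ℕ) (M : Type*) [TopologicalSpace M] : Prop :=
  ∀ x : M, ∃ U : Set M, IsOpen U ∧ x ∈ U ∧ Nonempty (U ≃ₜ EuclideanSpace ℝ (Fin n))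

/-!
Charts make `M` locally compact and give it a nonempty open subset `U` homeomorphic to `ℝⁿ`,
hence second countable. Since every orbit is dense and the set of times sending a given point
into `U` is open, every point is sent into `U` at some rational time, so countably many
translates of `U` by the flow cover `M`. Thus `M` is second countable, locally compact and
Hausdorff, hence metrizable by Urysohn.
-/

open Set TopologicalSpace

theorem LocallyCompactSpace.of_forall_isOpen_locallyCompactSpace {X : Type*}
    [TopologicalSpace X]
    (h : ∀ x : X, ∃ U : Set X, IsOpen U ∧ x ∈ U ∧ LocallyCompactSpace U) :
    LocallyCompactSpace X := by
  choose U hUo hxU hU using h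
  have hbasis (x : X) : (𝓝 x).HasBasis (fun s : Set (U x) => s ∈ 𝓝 ⟨x, hxU x⟩ ∧ IsCompact s)
      ((↑) '' ·) := by
    have hnhds : 𝓝 x = (𝓝 (⟨x, hxU x⟩ : U x)).map (↑) :=
      ((hUo x).isOpenEmbedding_subtypeVal.map_nhds_eq ⟨x, hxU x⟩).symm
    rw [hnhds]
    exact (compact_basis_nhds _).map _
  exact .of_hasBasis hbasis fun x s ⟨_, hs⟩ => hs.image continuous_subtype_val

theorem IsManifoldOfDim.locallyCompactSpace {n : ℕ} {M : Type*} [TopologicalSpace M]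
    (hM : IsManifoldOfDim n M) : LocallyCompactSpace M :=
  .of_forall_isOpen_locallyCompactSpace fun x => by
    obtain ⟨U, hUo, hxU, ⟨e⟩⟩ := hM x
    exact ⟨U, hUo, hxU, e.isOpenEmbedding.locallyCompactSpace⟩

theorem Flow.secondCountableTopology_of_dense_orbits {τ α : Type*} [TopologicalSpace τ]
    [AddGroup τ] [SeparableSpace τ] [TopologicalSpace α] (ϕ : Flow τ α)
    (hϕ : ∀ x, Dense (ϕ.orbit x)) {U : Set α} (hUo : IsOpen U) (hU : U.Nonempty)
    [SecondCountableTopology U] : SecondCountableTopology α := by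
  obtain ⟨D, hDc, hDd⟩ := exists_countable_dense τ
  have : Countable D := hDc.to_subtype
  have hcover : ⋃ t : D, ϕ t ⁻¹' U = univ := by
    refine eq_univ_of_forall fun x => mem_iUnion.2 ?_
    have hopen : IsOpen {t | ϕ t x ∈ U} :=
      hUo.preimage (ϕ.continuous continuous_id continuous_const)
    obtain ⟨_, htU, t, rfl⟩ := (hϕ x).inter_open_nonempty U hUo hU
    obtain ⟨s, hs, hsD⟩ := hDd.inter_open_nonempty _ hopen ⟨t, htU⟩
    exact ⟨⟨s, hsD⟩, hs⟩
  have (t : D) : SecondCountableTopology (ϕ t ⁻¹' U) :=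
    ((ϕ.toHomeomorph t).isEmbedding.restrictPreimage U).secondCountableTopology
  exact secondCountableTopology_of_countable_cover (ι := D)
    (fun t => hUo.preimage (ϕ.continuous_toFun t)) hcover

theorem metrizable_of_minimal_flow_general (n : ℕ) (M : Type*) [TopologicalSpace M]
    [T2Space M] (hM : IsManifoldOfDim n M)
    (φ : ℝ × M → M) (hφ : Continuous φ)
    (hzero : ∀ x : M, φ (0, x) = x)
    (hadd : ∀ (s t : ℝ) (x : M), φ (s, φ (t, x)) = φ (s + t, x))
    (hmin : ∀ x : M, Dense (Set.range fun t : ℝ => φ (t, x))) :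
    TopologicalSpace.MetrizableSpace M := by
  let ϕ : Flow ℝ M :=
    { toFun := fun t x => φ (t, x)
      cont' := hφ
      map_add' := fun s t x => (hadd s t x).symm
      map_zero' := hzero }
  have := hM.locallyCompactSpace
  rcases isEmpty_or_nonempty M with _ | ⟨⟨x₀⟩⟩
  · infer_instance
  obtain ⟨U, hUo, hx₀U, ⟨e⟩⟩ := hM x₀
  have := e.isEmbedding.secondCountableTopology
  have := ϕ.secondCountableTopology_of_dense_orbits hmin hUo ⟨x₀, hx₀U⟩
  infer_instance

/-- A connected Hausdorff topological `n`-manifold supporting a minimal flow (a flow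
all of whose orbits are dense) is metrizable. -/
theorem metrizable_of_minimal_flow (n : ℕ) (M : Type*) [TopologicalSpace M]
    [T2Space M] [ConnectedSpace M] (hM : IsManifoldOfDim n M)
    (φ : ℝ × M → M) (hφ : Continuous φ)
    (hzero : ∀ x : M, φ (0, x) = x)
    (hadd : ∀ (s t : ℝ) (x : M), φ (s, φ (t, x)) = φ (s + t, x))
    (hmin : ∀ x : M, Dense (Set.range fun t : ℝ => φ (t, x))) :
    TopologicalSpace.MetrizableSpace M :=
  metrizable_of_minimal_flow_general n M hM φ hφ hzero hadd hmin
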